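/- arXiv:2202.01960 — 8 statements merged into one kernel-verified Lean document; each statement's English description precedes it below -/
import Mathlib

section
/- Let X be a PSCA(v, t, λ) with v ≥ t ≥ 2 and λ ≥ 1. Then for every symbol w ∈ [v] and every i with 0 ≤ i ≤ t−1, we have λ·(v−1)!/(v−t)! = Σ_{j=0}^{v−1} d_w(j)·C(j, i)·C(v−1−j, t−1−i). -/
open scoped Classical

/-- A permutation `π` of `[v]` covers a sequence `s` of `t` distinct symbols if the
symbols appear in `π` in the given order, i.e. `π⁻¹(s 0) < ⋯ < π⁻¹(s (t-1))`. -/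
def Covers {v t : ℕ} (π : Equiv.Perm (Fin v)) (s : Fin t → Fin v) : Prop :=
  StrictMono fun i => π.symm (s i)

/-- `X` is a perfect sequence covering array PSCA(v, t, λ): every sequence of `t`
distinct symbols of `[v]` is covered by exactly `λ` permutations of `X` (with multiplicity). -/
def IsPSCA (v t l : ℕ) (X : Multiset (Equiv.Perm (Fin v))) : Prop :=
  ∀ s : Fin t → Fin v, Function.Injective s → X.countP (fun π => Covers π s) = l

/-- `dcount v X w j` is the number of permutations `π` in `X` (with multiplicity)
such that `π(j) = w`. -/
noncomputable def dcount (v : ℕ) (X : Multiset (Equiv.Perm (Fin v))) (w : Fin v) (j : ℕ) : ℕ :=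
  X.countP fun π => ∃ p : Fin v, (p : ℕ) = j ∧ π p = w


/-!
Double count the pairs `(π, s)` with `π ∈ X` and `s` an injective `t`-sequence with `s i = w`
covered by `π`. Each of the `(v-1)!/(v-t)!` such sequences is covered `λ` times. Conversely, if
`π⁻¹(w) = j`, the sequences covered by `π` with `s i = w` are `π ∘ f` for strictly monotone `f`
with `f i = j`, i.e. a choice of `i` positions below `j` and `t-1-i` positions above it.
-/

open Finset Function

section LinearOrder

variable {α : Type*} [LinearOrder α] {t : ℕ}

lemma card_filter_lt_image_of_strictMono {f : Fin t → α} (hf : StrictMono f) (k : Fin t) :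
    #{x ∈ univ.image f | x < f k} = k := by
  have : {x ∈ univ.image f | x < f k} = (Iio k).image f := by
    ext x
    simp only [mem_filter, mem_image, mem_univ, true_and, mem_Iio]
    grind [hf.lt_iff_lt]
  rw [this, card_image_of_injective _ hf.injective, Fin.card_Iio]

lemma card_strictMono_apply_eq_card_finset [Fintype α] (i : Fin t) (a : α) :
    #{f : Fin t → α | StrictMono f ∧ f i = a} =
      #{A : Finset α | #A = t ∧ a ∈ A ∧ #{x ∈ A | x < a} = i} := by
  refine card_bij (fun f _ => univ.image f) ?_ ?_ ?_
  · simp only [mem_filter, mem_univ, true_and]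
    rintro f ⟨hf, rfl⟩
    exact ⟨by simp [card_image_of_injective _ hf.injective], mem_image_of_mem f (mem_univ i),
      card_filter_lt_image_of_strictMono hf i⟩
  · simp only [mem_filter, mem_univ, true_and]
    rintro f₁ ⟨hf₁, -⟩ f₂ ⟨hf₂, -⟩ himage
    have hcard : #(univ.image f₁) = t := by simp [card_image_of_injective _ hf₁.injective]
    exact (orderEmbOfFin_unique hcard (fun x => mem_image_of_mem f₁ (mem_univ x)) hf₁).trans
      (orderEmbOfFin_unique hcard (fun x => himage ▸ mem_image_of_mem f₂ (mem_univ x)) hf₂).symm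
  · simp only [mem_filter, mem_univ, true_and]
    rintro A ⟨hA, ha, hcount⟩
    set f := A.orderEmbOfFin hA
    have himage : univ.image f = A := by
      apply coe_injective
      rw [coe_image, coe_univ, Set.image_univ, range_orderEmbOfFin]
    obtain ⟨k, rfl⟩ : a ∈ Set.range f := by rwa [range_orderEmbOfFin]
    have hk : k = i := by
      have := card_filter_lt_image_of_strictMono f.strictMono k
      rw [himage] at this
      exact Fin.ext (this.symm.trans hcount)
    exact ⟨f, ⟨f.strictMono, by rw [hk]⟩, himage⟩

lemma insert_filter_lt_union_filter_gt {A : Finset α} {a : α} (ha : a ∈ A) :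
    insert a ({x ∈ A | x < a} ∪ {x ∈ A | a < x}) = A := by
  ext x
  simp only [mem_insert, mem_union, mem_filter]
  grind

lemma card_eq_card_filter_lt_add_card_filter_gt {A : Finset α} {a : α} (ha : a ∈ A) :
    #A = #{x ∈ A | x < a} + #{x ∈ A | a < x} + 1 := by
  conv_lhs => rw [← insert_filter_lt_union_filter_gt ha]
  rw [card_insert_of_notMem (by simp), card_union_of_disjoint]
  exact disjoint_filter.2 fun x _ h₁ h₂ => (h₁.trans h₂).false

section Split

variable {a : α} {B C : Finset α} (hB : ∀ x ∈ B, x < a) (hC : ∀ x ∈ C, a < x)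
include hB hC

lemma filter_insert_union_lt : {x ∈ insert a (B ∪ C) | x < a} = B := by
  ext x
  simp only [mem_insert, mem_union, mem_filter]
  grind

lemma filter_insert_union_gt : {x ∈ insert a (B ∪ C) | a < x} = C := by
  ext x
  simp only [mem_insert, mem_union, mem_filter]
  grind

end Split

lemma card_finset_mem_card_filter_lt_eq_choose_mul [Fintype α] (a : α) {i : ℕ} (hit : i < t) :
    #{A : Finset α | #A = t ∧ a ∈ A ∧ #{x ∈ A | x < a} = i} =
      (#{x | x < a}).choose i * (#{x | a < x}).choose (t - 1 - i) := by
  rw [← card_powersetCard, ← card_powersetCard, ← card_product]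
  refine card_nbij' (fun A => ({x ∈ A | x < a}, {x ∈ A | a < x})) (fun p => insert a (p.1 ∪ p.2))
    ?_ ?_ ?_ ?_
  · intro A hA
    obtain ⟨-, hA, ha, hlt⟩ := mem_filter.1 (mem_coe.1 hA)
    have := card_eq_card_filter_lt_add_card_filter_gt ha
    simp only [mem_coe, mem_product, mem_powersetCard, subset_iff, mem_filter, mem_univ, true_and]
    refine ⟨⟨fun x hx => hx.2, hlt⟩, fun x hx => hx.2, by omega⟩
  · rintro ⟨B, C⟩ hBC
    simp only [mem_coe, mem_product, mem_powersetCard, subset_iff, mem_filter, mem_univ,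
      true_and] at hBC ⊢
    obtain ⟨⟨hB, rfl⟩, hC, hCcard⟩ := hBC
    have ha := mem_insert_self a (B ∪ C)
    have := card_eq_card_filter_lt_add_card_filter_gt ha
    rw [filter_insert_union_lt hB hC, filter_insert_union_gt hB hC] at this
    exact ⟨by omega, ha, by rw [filter_insert_union_lt hB hC]⟩
  · intro A hA
    exact insert_filter_lt_union_filter_gt (mem_filter.1 (mem_coe.1 hA)).2.2.1
  · rintro ⟨B, C⟩ hBC
    simp only [mem_coe, mem_product, mem_powersetCard, subset_iff, mem_filter, mem_univ,
      true_and] at hBC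
    exact Prod.ext (filter_insert_union_lt hBC.1.1 hBC.2.1) (filter_insert_union_gt hBC.1.1 hBC.2.1)

end LinearOrder

lemma card_injective_apply_eq_descFactorial {ι β : Type*} [Fintype ι] [DecidableEq ι] [Fintype β]
    [DecidableEq β] (i : ι) (b : β) :
    #{f : ι → β | Injective f ∧ f i = b} =
      (Fintype.card β - 1).descFactorial (Fintype.card ι - 1) := by
  have hsymm (b' : β) :
      #{f : ι → β | Injective f ∧ f i = b'} = #{f : ι → β | Injective f ∧ f i = b} :=
    card_equiv (Equiv.piCongrRight fun _ => Equiv.swap b' b) fun f => by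
      simp only [mem_filter, mem_univ, true_and]
      exact and_congr ((Equiv.swap b' b).injective.of_comp_iff f).symm
        (by simp [Equiv.swap_apply_eq_iff])
  have hsum : ∑ b', #{f : ι → β | Injective f ∧ f i = b'} =
      (Fintype.card β).descFactorial (Fintype.card ι) := calc
    _ = #{f : ι → β | Injective f} := by
      rw [card_eq_sum_card_fiberwise (f := fun f : ι → β => f i) (t := univ) fun _ _ => mem_univ _]
      simp only [filter_filter]
    _ = _ := by
      rw [← Fintype.card_subtype, Fintype.card_congr (Equiv.subtypeInjectiveEquivEmbedding ι β),
        Fintype.card_embedding_eq]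
  -- all fibres of `f ↦ f i` have the same size, so cancel `#β` from `#(ι ↪ β) = #β * #fibre`
  simp_rw [hsymm, sum_const, card_univ, smul_eq_mul] at hsum
  obtain ⟨m, hm⟩ := Nat.exists_eq_add_one.2 (Fintype.card_pos_iff.2 ⟨i⟩)
  obtain ⟨n, hn⟩ := Nat.exists_eq_add_one.2 (Fintype.card_pos_iff.2 ⟨b⟩)
  rw [hm, hn, Nat.succ_descFactorial_succ] at hsum
  rw [hm, hn, Nat.add_sub_cancel, Nat.add_sub_cancel]
  exact Nat.eq_of_mul_eq_mul_left n.succ_pos hsum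

namespace Multiset

variable {α β : Type*}

lemma sum_countP_eq_sum_map_card_filter (X : Multiset α) (S : Finset β) (p : β → α → Prop) :
    ∑ b ∈ S, X.countP (p b) = (X.map fun a => #{b ∈ S | p b a}).sum := by
  induction X using Multiset.induction with
  | empty => simp
  | cons a X ih =>
    simp only [countP_cons, map_cons, sum_cons, sum_add_distrib, ih, card_filter]
    rw [add_comm]

lemma sum_countP_eq_mul_eq_sum_map [DecidableEq β] (X : Multiset α) (S : Finset β) (g : α → β)
    (hg : ∀ a ∈ X, g a ∈ S) (c : β → ℕ) :
    ∑ b ∈ S, X.countP (fun a => g a = b) * c b = (X.map fun a => c (g a)).sum := by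
  induction X using Multiset.induction with
  | empty => simp
  | cons a X ih =>
    simp only [countP_cons, map_cons, sum_cons, add_mul, sum_add_distrib,
      ih fun a' ha' => hg a' (mem_cons_of_mem ha')]
    simp [hg a (mem_cons_self a X), add_comm]

end Multiset

lemma Covers.injective {v t : ℕ} {π : Equiv.Perm (Fin v)} {s : Fin t → Fin v}
    (h : Covers π s) : Injective s :=
  Injective.of_comp (f := π.symm) (StrictMono.injective h)

lemma card_covers_apply_eq_choose_mul {v t : ℕ} (π : Equiv.Perm (Fin v)) (i : Fin t) (w : Fin v) :
    #{s : Fin t → Fin v | Covers π s ∧ s i = w} =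
      (π.symm w : ℕ).choose i * (v - 1 - π.symm w).choose (t - 1 - i) := by
  have hcomp : #{s : Fin t → Fin v | Covers π s ∧ s i = w} =
      #{f : Fin t → Fin v | StrictMono f ∧ f i = π.symm w} :=
    card_equiv (Equiv.piCongrRight fun _ => π.symm) fun s => by
      simp only [mem_filter, mem_univ, true_and]
      exact and_congr Iff.rfl π.symm.apply_eq_iff_eq.symm
  rw [hcomp, card_strictMono_apply_eq_card_finset,
    card_finset_mem_card_filter_lt_eq_choose_mul _ i.is_lt, filter_gt_eq_Iio, filter_lt_eq_Ioi,
    Fin.card_Iio, Fin.card_Ioi]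

lemma dcount_eq_countP (v : ℕ) (X : Multiset (Equiv.Perm (Fin v))) (w : Fin v) (j : ℕ) :
    dcount v X w j = X.countP fun π => (π.symm w : ℕ) = j := by
  refine Multiset.countP_congr rfl fun π _ =>
    propext ⟨?_, fun h => ⟨_, h, π.apply_symm_apply w⟩⟩
  rintro ⟨p, rfl, rfl⟩
  rw [π.symm_apply_apply]

theorem stmt4_general (v t l : ℕ) (ht : 2 ≤ t) (htv : t ≤ v)
    (X : Multiset (Equiv.Perm (Fin v))) (hX : IsPSCA v t l X)
    (w : Fin v) (i : ℕ) (hi : i ≤ t - 1) :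
    l * (Nat.factorial (v - 1) / Nat.factorial (v - t)) =
      ∑ j ∈ Finset.range v, dcount v X w j * Nat.choose j i * Nat.choose (v - 1 - j) (t - 1 - i) := by
  have hit : i < t := by omega
  have hS : #{s : Fin t → Fin v | Injective s ∧ s ⟨i, hit⟩ = w} =
      (v - 1).factorial / (v - t).factorial := by
    rw [card_injective_apply_eq_descFactorial, Fintype.card_fin, Fintype.card_fin,
      Nat.descFactorial_eq_div (by omega), show v - 1 - (t - 1) = v - t by omega]
  set S : Finset (Fin t → Fin v) := {s | Injective s ∧ s ⟨i, hit⟩ = w}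
  have hcovers (π : Equiv.Perm (Fin v)) :
      {s ∈ S | Covers π s} = ({s | Covers π s ∧ s ⟨i, hit⟩ = w} : Finset _) := by
    ext s
    simp only [S, mem_filter, mem_univ, true_and]
    exact ⟨fun ⟨⟨_, hw⟩, hc⟩ => ⟨hc, hw⟩, fun ⟨hc, hw⟩ => ⟨⟨hc.injective, hw⟩, hc⟩⟩
  calc l * ((v - 1).factorial / (v - t).factorial) = ∑ s ∈ S, X.countP (Covers · s) := by
        rw [sum_congr rfl fun s hs => hX s (mem_filter.1 hs).2.1, sum_const, smul_eq_mul, hS,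
          mul_comm]
    _ = (X.map fun π => #{s ∈ S | Covers π s}).sum :=
        Multiset.sum_countP_eq_sum_map_card_filter X S fun s π => Covers π s
    _ = (X.map fun π => (π.symm w : ℕ).choose i * (v - 1 - π.symm w).choose (t - 1 - i)).sum := by
        simp_rw [hcovers, card_covers_apply_eq_choose_mul]
    _ = _ := by
        rw [← Multiset.sum_countP_eq_mul_eq_sum_map X (range v) (fun π => (π.symm w : ℕ))
          (fun π _ => mem_range.2 (π.symm w).is_lt)
          fun j => j.choose i * (v - 1 - j).choose (t - 1 - i)]
        simp_rw [dcount_eq_countP, mul_assoc]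

/-- Lemma 2.1: for a PSCA(v, t, λ), every symbol `w` and every `0 ≤ i ≤ t-1` satisfy
`λ·(v-1)!/(v-t)! = Σ_j d_w(j)·C(j,i)·C(v-1-j, t-1-i)`. -/
theorem stmt4 (v t l : ℕ) (ht : 2 ≤ t) (htv : t ≤ v) (hl : 1 ≤ l)
    (X : Multiset (Equiv.Perm (Fin v))) (hX : IsPSCA v t l X)
    (w : Fin v) (i : ℕ) (hi : i ≤ t - 1) :
    l * (Nat.factorial (v - 1) / Nat.factorial (v - t)) =
      ∑ j ∈ Finset.range v, dcount v X w j * Nat.choose j i * Nat.choose (v - 1 - j) (t - 1 - i) :=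
  stmt4_general v t l ht htv X hX w i hi
end

section
/- Let t be even and let d : {0,…,t} → ℤ≥0 satisfy λ·t! = (t−i)·d(i) + (i+1)·d(i+1) for all 0 ≤ i ≤ t−1 (the equations from Lemma 2.1 with v = t+1). Then d(t/2 − i) = d(t/2 + i) for all 0 ≤ i ≤ t/2; that is, d is palindromic. -/
/-- Lemma 2.4: a `(t+1, t, λ)`-feasible distribution with `t` even is palindromic. -/
theorem stmt7 (t l : ℕ) (ht : Even t) (d : ℕ → ℕ)
    (hd : ∀ i ≤ t - 1, l * Nat.factorial t = (t - i) * d i + (i + 1) * d (i + 1)) :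
    ∀ i ≤ t / 2, d (t / 2 - i) = d (t / 2 + i) := by
  obtain ⟨m, rfl⟩ := ht
  have hm : (m + m) / 2 = m := by omega
  rw [hm]
  intro i hi
  induction i with
  | zero => simp
  | succ i ih =>
    have him : i + 1 ≤ m := hi
    have h1 := hd (m - i - 1) (by omega)
    have h2 := hd (m + i) (by omega)
    have e1 : m + m - (m - i - 1) = m + i + 1 := by omega
    have e2 : m - i - 1 + 1 = m - i := by omega
    have e3 : m + m - (m + i) = m - i := by omega
    rw [e1, e2] at h1
    rw [e3] at h2
    have ihe : d (m - i) = d (m + i) := ih (by omega)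
    rw [ihe] at h1
    have key : (m + i + 1) * d (m - i - 1) = (m + i + 1) * d (m + i + 1) := by
      omega
    have := Nat.eq_of_mul_eq_mul_left (by omega) key
    have e4 : m - (i + 1) = m - i - 1 := by omega
    rw [e4, this]
    rfl
end

section
/- Let X be a PSCA(t+1, t, 1), let w ∈ [t+1], and let 0 ≤ i ≤ t. Then for any i-subset I of [t+1]∖{w}, the number d_{I,w} of permutations π ∈ X with π(i) = w and {π(0),…,π(i−1)} = I is equal to d_w(i)/C(t, i). In particular, this number is independent of the choice of i-subset I. -/
open scoped Classical

/- ------------------------------------------------------------------ -/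
/- Auxiliary material -/

namespace PSCAaux

variable {t : ℕ}

lemma val_succAbove (m : Fin (t + 1)) (j : Fin t) :
    ((m.succAbove j : Fin (t + 1)) : ℕ) = if (j : ℕ) < (m : ℕ) then (j : ℕ) else (j : ℕ) + 1 := by
  rcases lt_or_ge ((j : ℕ)) ((m : ℕ)) with h | h
  · rw [Fin.succAbove_of_castSucc_lt _ _ (by simpa [Fin.lt_def] using h), if_pos h]
    simp
  · rw [Fin.succAbove_of_le_castSucc _ _ (by simpa [Fin.le_def] using h), if_neg (not_lt.2 h)]
    simp

lemma strictMono_eq_succAbove {f : Fin t → Fin (t + 1)} {m : Fin (t + 1)}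
    (hf : StrictMono f) (hm : ∀ j, f j ≠ m) : f = m.succAbove := by
  have key : Set.range f = Set.range m.succAbove := by
    have himg : Finset.image f Finset.univ = Finset.univ.erase m := by
      apply Finset.eq_of_subset_of_card_le
      · intro x hx
        simp only [Finset.mem_image] at hx
        obtain ⟨j, -, rfl⟩ := hx
        exact Finset.mem_erase.2 ⟨hm j, Finset.mem_univ _⟩
      · rw [Finset.card_erase_of_mem (Finset.mem_univ m),
          Finset.card_image_of_injective _ hf.injective]
        simp
    ext x
    rw [Fin.range_succAbove]
    constructor
    · rintro ⟨j, rfl⟩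
      exact hm j
    · intro hx
      have hx' : x ∈ Finset.univ.erase m :=
        Finset.mem_erase.2 ⟨by simpa using hx, Finset.mem_univ _⟩
      rw [← himg] at hx'
      simp only [Finset.mem_image] at hx'
      obtain ⟨j, -, rfl⟩ := hx'
      exact ⟨j, rfl⟩
  haveI : WellFoundedLT (Fin t) := inferInstance
  exact (StrictMono.range_inj hf (Fin.strictMono_succAbove m)).1 key

lemma covers_eq {π : Equiv.Perm (Fin (t + 1))} {z : Fin (t + 1)} {s : Fin t → Fin (t + 1)}
    (hc : Covers π s) (hz : ∀ j, s j ≠ z) :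
    s = fun j => π ((π.symm z).succAbove j) := by
  have h2 : ∀ j, π.symm (s j) ≠ π.symm z := fun j h => hz j (π.symm.injective h)
  have h3 := strictMono_eq_succAbove hc h2
  funext j
  have h4 := congrFun h3 j
  have := congrArg π h4
  simpa using this

lemma covers_succAbove (π : Equiv.Perm (Fin (t + 1))) (m : Fin (t + 1)) :
    Covers π (fun j => π (m.succAbove j)) := by
  unfold Covers
  simp only [Equiv.symm_apply_apply]
  exact Fin.strictMono_succAbove m

/-- The basic count in the theorem, with a `Fin` position index. -/
noncomputable def DD (t : ℕ) (X : Multiset (Equiv.Perm (Fin (t + 1)))) (w : Fin (t + 1))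
    (I : Finset (Fin (t + 1))) (k : Fin (t + 1)) : ℕ :=
  X.countP (fun π => π k = w ∧ Finset.image (fun j => π j) (Finset.Iio k) = I)

lemma countP_eq_sum {α : Type*} (X : Multiset α) (p : α → Prop) [DecidablePred p] :
    X.countP p = (X.map (fun a => if p a then 1 else 0)).sum := by
  induction X using Multiset.induction_on with
  | empty => simp
  | cons a X ih => simp [Multiset.countP_cons, ih, add_comm]

lemma sum_countP {α β : Type*} (X : Multiset α) (S : Finset β) (p : β → α → Prop)
    [∀ s, DecidablePred (p s)] [∀ a, DecidablePred (fun s => p s a)] :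
    ∑ s ∈ S, X.countP (p s) = (X.map (fun a => (S.filter (fun s => p s a)).card)).sum := by
  induction X using Multiset.induction_on with
  | empty => simp
  | cons a X ih =>
    simp only [Multiset.countP_cons, Multiset.map_cons, Multiset.sum_cons,
      Finset.sum_add_distrib, ih, Finset.card_filter]
    ring

/-- The auxiliary set of sequences used in the double count. -/
noncomputable def SS (t : ℕ) (w z : Fin (t + 1)) (I : Finset (Fin (t + 1))) (k : ℕ)
    (hk : k < t) : Finset (Fin t → Fin (t + 1)) :=
  Finset.univ.filter (fun s => Function.Injective s ∧ (∀ j, s j ≠ z) ∧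
    s ⟨k, hk⟩ = w ∧ Finset.image s (Finset.Iio (⟨k, hk⟩ : Fin t)) = I)

lemma filter_covers (t : ℕ) (w z : Fin (t + 1)) (I : Finset (Fin (t + 1))) (k : ℕ) (hk : k < t)
    (hk1 : k < t + 1) (hk2 : k + 1 < t + 1)
    (hw : w ∉ I) (hz : z ∉ I) (hzw : z ≠ w) (π : Equiv.Perm (Fin (t + 1))) :
    ((SS t w z I k hk).filter (fun s => Covers π s)).card =
      (if π ⟨k, hk1⟩ = w ∧
          Finset.image (fun j => π j) (Finset.Iio (⟨k, hk1⟩ : Fin (t + 1))) = I then 1 else 0) +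
      (if π ⟨k + 1, hk2⟩ = w ∧
          Finset.image (fun j => π j) (Finset.Iio (⟨k + 1, hk2⟩ : Fin (t + 1))) = insert z I
        then 1 else 0) := by
  set m : Fin (t + 1) := π.symm z with hmdef
  have hπm : π m = z := π.apply_symm_apply z
  set sπ : Fin t → Fin (t + 1) := fun j => π (m.succAbove j) with hsπ
  set P1 : Prop := π ⟨k, hk1⟩ = w ∧
      Finset.image (fun j => π j) (Finset.Iio (⟨k, hk1⟩ : Fin (t + 1))) = I with hP1def
  set P2 : Prop := π ⟨k + 1, hk2⟩ = w ∧
      Finset.image (fun j => π j) (Finset.Iio (⟨k + 1, hk2⟩ : Fin (t + 1))) = insert z I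
    with hP2def
  have hinj : Function.Injective sπ := fun a b hab =>
    Fin.succAbove_right_injective (π.injective hab)
  have havoid : ∀ j, sπ j ≠ z := fun j h =>
    Fin.succAbove_ne m j (π.injective (h.trans hπm.symm))
  have hcov : Covers π sπ := covers_succAbove π m
  have hmem : ∀ s, s ∈ (SS t w z I k hk).filter (fun s => Covers π s) ↔
      (Function.Injective s ∧ (∀ j, s j ≠ z) ∧ s ⟨k, hk⟩ = w ∧
        Finset.image s (Finset.Iio (⟨k, hk⟩ : Fin t)) = I) ∧ Covers π s := by
    intro s
    simp only [SS, Finset.mem_filter, Finset.mem_univ, true_and]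
  have huniq : ∀ s ∈ (SS t w z I k hk).filter (fun s => Covers π s), s = sπ := by
    intro s hs
    rw [hmem] at hs
    exact covers_eq hs.2 hs.1.2.1
  have main : ((sπ ⟨k, hk⟩ = w ∧ Finset.image sπ (Finset.Iio (⟨k, hk⟩ : Fin t)) = I) ↔
      (P1 ∨ P2)) ∧ ¬(P1 ∧ P2) := by
    rcases lt_or_ge k ((m : ℕ)) with hcase | hcase
    · -- k < m : the conditions on sπ are equivalent to P1, and P2 is impossible
      have hA1 : sπ ⟨k, hk⟩ = π ⟨k, hk1⟩ := by
        apply congrArg π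
        apply Fin.ext
        rw [val_succAbove]
        exact if_pos hcase
      have hA2 : Finset.image sπ (Finset.Iio (⟨k, hk⟩ : Fin t)) =
          Finset.image (fun j => π j) (Finset.Iio (⟨k, hk1⟩ : Fin (t + 1))) := by
        ext x
        simp only [Finset.mem_image, Finset.mem_Iio]
        constructor
        · rintro ⟨j, hj, rfl⟩
          have hjk : (j : ℕ) < k := hj
          refine ⟨m.succAbove j, ?_, rfl⟩
          show ((m.succAbove j : Fin (t + 1)) : ℕ) < k
          rw [val_succAbove, if_pos (by omega)]
          exact hjk
        · rintro ⟨j, hj, rfl⟩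
          have hjk : (j : ℕ) < k := hj
          refine ⟨⟨(j : ℕ), by omega⟩, hjk, ?_⟩
          apply congrArg π
          apply Fin.ext
          rw [val_succAbove]
          rw [if_pos (show ((⟨(j : ℕ), by omega⟩ : Fin t) : ℕ) < (m : ℕ) by simp only [Fin.val_mk]; omega)]
      have hA3 : ¬ P2 := by
        rintro ⟨h1, h2⟩
        have hzmem : z ∈ Finset.image (fun j => π j)
            (Finset.Iio (⟨k + 1, hk2⟩ : Fin (t + 1))) := by
          rw [h2]; exact Finset.mem_insert_self z I
        simp only [Finset.mem_image, Finset.mem_Iio] at hzmem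
        obtain ⟨j, hj, hjz⟩ := hzmem
        have hjm : j = m := π.injective (hjz.trans hπm.symm)
        have : (j : ℕ) < k + 1 := hj
        omega
      refine ⟨?_, fun h => hA3 h.2⟩
      rw [hA1, hA2]
      exact ⟨fun h => Or.inl h, fun h => h.resolve_right hA3⟩
    · -- m ≤ k : the conditions on sπ are equivalent to P2, and P1 is impossible
      have hB1 : sπ ⟨k, hk⟩ = π ⟨k + 1, hk2⟩ := by
        apply congrArg π
        apply Fin.ext
        rw [val_succAbove]
        exact if_neg (by simp only [Fin.val_mk]; omega)
      have hzmem : z ∈ Finset.image (fun j => π j)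
          (Finset.Iio (⟨k + 1, hk2⟩ : Fin (t + 1))) := by
        simp only [Finset.mem_image, Finset.mem_Iio]
        exact ⟨m, show (m : ℕ) < k + 1 by omega, hπm⟩
      have hB2 : Finset.image sπ (Finset.Iio (⟨k, hk⟩ : Fin t)) =
          (Finset.image (fun j => π j) (Finset.Iio (⟨k + 1, hk2⟩ : Fin (t + 1)))).erase z := by
        ext x
        simp only [Finset.mem_image, Finset.mem_Iio, Finset.mem_erase]
        constructor
        · rintro ⟨j, hj, rfl⟩
          have hjk : (j : ℕ) < k := hj
          refine ⟨havoid j, m.succAbove j, ?_, rfl⟩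
          show ((m.succAbove j : Fin (t + 1)) : ℕ) < k + 1
          have hv : ((m.succAbove j : Fin (t + 1)) : ℕ) ≤ (j : ℕ) + 1 := by
            rw [val_succAbove]; split <;> omega
          omega
        · rintro ⟨hxz, j, hj, rfl⟩
          have hjk : (j : ℕ) < k + 1 := hj
          have hjm : j ≠ m := fun h => hxz (by rw [h, hπm])
          rcases lt_or_ge ((j : ℕ)) ((m : ℕ)) with hc | hc
          · refine ⟨⟨(j : ℕ), by omega⟩, show (j : ℕ) < k by omega, ?_⟩
            apply congrArg π
            apply Fin.ext
            rw [val_succAbove]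
            rw [if_pos (show ((⟨(j : ℕ), by omega⟩ : Fin t) : ℕ) < (m : ℕ) by simp only [Fin.val_mk]; omega)]
          · have hlt : (m : ℕ) < (j : ℕ) :=
              lt_of_le_of_ne hc (fun h => hjm (Fin.ext h.symm))
            refine ⟨⟨(j : ℕ) - 1, by omega⟩, show (j : ℕ) - 1 < k by omega, ?_⟩
            apply congrArg π
            apply Fin.ext
            rw [val_succAbove]
            rw [if_neg (show ¬ ((⟨(j : ℕ) - 1, by omega⟩ : Fin t) : ℕ) < (m : ℕ) by
              simp only; omega)]
            simp only
            omega
      have hB3 : ¬ P1 := by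
        rintro ⟨h1, h2⟩
        rcases eq_or_lt_of_le hcase with heq | hlt
        · apply hzw
          rw [← hπm]
          have : m = (⟨k, hk1⟩ : Fin (t + 1)) := Fin.ext heq
          rw [this]
          exact h1
        · apply hz
          rw [← h2]
          simp only [Finset.mem_image, Finset.mem_Iio]
          exact ⟨m, show (m : ℕ) < k from hlt, hπm⟩
      refine ⟨?_, fun h => hB3 h.1⟩
      rw [hB1, hB2]
      constructor
      · rintro ⟨h1, h2⟩
        refine Or.inr ⟨h1, ?_⟩
        rw [← h2]
        exact (Finset.insert_erase hzmem).symm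
      · intro h
        obtain ⟨h1, h2⟩ := h.resolve_left hB3
        exact ⟨h1, by rw [h2, Finset.erase_insert hz]⟩
  obtain ⟨hkey, hexcl⟩ := main
  by_cases hP : P1 ∨ P2
  · have hfil : (SS t w z I k hk).filter (fun s => Covers π s) = {sπ} := by
      apply Finset.eq_singleton_iff_unique_mem.2
      constructor
      · rw [hmem]
        exact ⟨⟨hinj, havoid, (hkey.2 hP).1, (hkey.2 hP).2⟩, hcov⟩
      · exact huniq
    rw [hfil, Finset.card_singleton]
    rcases hP with h1 | h2
    · rw [if_pos h1, if_neg (fun h2 => hexcl ⟨h1, h2⟩)]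
    · rw [if_neg (fun h1 => hexcl ⟨h1, h2⟩), if_pos h2]
  · have hfil : (SS t w z I k hk).filter (fun s => Covers π s) = ∅ := by
      rw [Finset.eq_empty_iff_forall_notMem]
      intro s hs
      have hse := huniq s hs
      subst hse
      rw [hmem] at hs
      exact hP (hkey.1 ⟨hs.1.2.2.1, hs.1.2.2.2⟩)
    rw [hfil, Finset.card_empty,
      if_neg (fun h => hP (Or.inl h)), if_neg (fun h => hP (Or.inr h))]

lemma rel_lemma (t : ℕ) (X : Multiset (Equiv.Perm (Fin (t + 1)))) (hX : IsPSCA (t + 1) t 1 X)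
    (w z : Fin (t + 1)) (I : Finset (Fin (t + 1))) (k : ℕ) (hk : k < t)
    (hk1 : k < t + 1) (hk2 : k + 1 < t + 1)
    (hw : w ∉ I) (hz : z ∉ I) (hzw : z ≠ w) :
    DD t X w I ⟨k, hk1⟩ + DD t X w (insert z I) ⟨k + 1, hk2⟩ = (SS t w z I k hk).card := by
  have h1 : ∀ s ∈ SS t w z I k hk, X.countP (fun π => Covers π s) = 1 := by
    intro s hs
    have hsi : Function.Injective s := by
      simp only [SS, Finset.mem_filter, Finset.mem_univ, true_and] at hs
      exact hs.1
    exact hX s hsi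
  have h2 : (SS t w z I k hk).card =
      ∑ s ∈ SS t w z I k hk, X.countP (fun π => Covers π s) := by
    rw [Finset.sum_congr rfl h1]
    simp
  rw [h2, sum_countP X (SS t w z I k hk) (fun s π => Covers π s)]
  rw [Multiset.map_congr rfl (fun π _ => filter_covers t w z I k hk hk1 hk2 hw hz hzw π)]
  rw [Multiset.sum_map_add]
  unfold DD
  rw [countP_eq_sum, countP_eq_sum]

lemma swap_mem (t : ℕ) (w z z' : Fin (t + 1)) (I : Finset (Fin (t + 1))) (k : ℕ) (hk : k < t)
    (hz : z ∉ I) (hz' : z' ∉ I) (hzw : z ≠ w) (hz'w : z' ≠ w)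
    {s : Fin t → Fin (t + 1)} (hs : s ∈ SS t w z I k hk) :
    (fun j => Equiv.swap z z' (s j)) ∈ SS t w z' I k hk := by
  simp only [SS, Finset.mem_filter, Finset.mem_univ, true_and] at hs ⊢
  obtain ⟨h1, h2, h3, h4⟩ := hs
  refine ⟨fun a b hab => h1 ((Equiv.swap z z').injective hab), ?_, ?_, ?_⟩
  · intro j hj
    exact h2 j ((Equiv.swap z z').injective (hj.trans (Equiv.swap_apply_left z z').symm))
  · show Equiv.swap z z' (s ⟨k, hk⟩) = w
    rw [h3]
    exact Equiv.swap_apply_of_ne_of_ne (Ne.symm hzw) (Ne.symm hz'w)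
  · show Finset.image (fun j => Equiv.swap z z' (s j)) (Finset.Iio ⟨k, hk⟩) = I
    have hcomp : Finset.image (fun j => Equiv.swap z z' (s j)) (Finset.Iio (⟨k, hk⟩ : Fin t)) =
        (Finset.image s (Finset.Iio (⟨k, hk⟩ : Fin t))).image (⇑(Equiv.swap z z')) := by
      rw [Finset.image_image]
      rfl
    rw [hcomp, h4]
    have hfix : ∀ x ∈ I, Equiv.swap z z' x = x := fun x hx =>
      Equiv.swap_apply_of_ne_of_ne (fun h => hz (h ▸ hx)) (fun h => hz' (h ▸ hx))
    calc I.image (⇑(Equiv.swap z z')) = I.image id := Finset.image_congr hfix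
      _ = I := Finset.image_id

lemma swap_card (t : ℕ) (w z z' : Fin (t + 1)) (I : Finset (Fin (t + 1))) (k : ℕ) (hk : k < t)
    (hz : z ∉ I) (hz' : z' ∉ I) (hzw : z ≠ w) (hz'w : z' ≠ w) :
    (SS t w z I k hk).card = (SS t w z' I k hk).card := by
  refine Finset.card_bij' (fun s _ => fun j => Equiv.swap z z' (s j))
    (fun s _ => fun j => Equiv.swap z z' (s j)) ?_ ?_ ?_ ?_
  · intro s hs
    exact swap_mem t w z z' I k hk hz hz' hzw hz'w hs
  · intro s hs
    have := swap_mem t w z' z I k hk hz' hz hz'w hzw hs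
    rwa [Equiv.swap_comm] at this
  · intro s hs
    funext j
    simp [Equiv.swap_apply_self]
  · intro s hs
    funext j
    simp [Equiv.swap_apply_self]

lemma DD_adjacent (t : ℕ) (X : Multiset (Equiv.Perm (Fin (t + 1)))) (hX : IsPSCA (t + 1) t 1 X)
    (w z z' : Fin (t + 1)) (Im : Finset (Fin (t + 1))) (km : ℕ) (hkm : km < t)
    (hk1 : km < t + 1) (hk2 : km + 1 < t + 1)
    (hw : w ∉ Im) (hz : z ∉ Im) (hz' : z' ∉ Im) (hzw : z ≠ w) (hz'w : z' ≠ w) :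
    DD t X w (insert z Im) ⟨km + 1, hk2⟩ = DD t X w (insert z' Im) ⟨km + 1, hk2⟩ := by
  have r1 := rel_lemma t X hX w z Im km hkm hk1 hk2 hw hz hzw
  have r2 := rel_lemma t X hX w z' Im km hkm hk1 hk2 hw hz' hz'w
  have hc := swap_card t w z z' Im km hkm hz hz' hzw hz'w
  omega

lemma DD_constant (t : ℕ) (X : Multiset (Equiv.Perm (Fin (t + 1)))) (hX : IsPSCA (t + 1) t 1 X)
    (w : Fin (t + 1)) (k : Fin (t + 1)) :
    ∀ n (J J' : Finset (Fin (t + 1))), (J \ J').card = n → J.card = (k : ℕ) →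
      J'.card = (k : ℕ) → w ∉ J → w ∉ J' → DD t X w J k = DD t X w J' k := by
  intro n
  induction n using Nat.strong_induction_on with
  | _ n ih =>
    intro J J' hn hJ hJ' hwJ hwJ'
    rcases Nat.eq_zero_or_pos n with rfl | hpos
    · have hsub : J ⊆ J' := Finset.sdiff_eq_empty_iff_subset.1 (Finset.card_eq_zero.1 hn)
      have hJJ' : J = J' := Finset.eq_of_subset_of_card_le hsub (by omega)
      rw [hJJ']
    · obtain ⟨z, hzmem⟩ := Finset.card_pos.1 (show 0 < (J \ J').card by omega)
      have hzJ : z ∈ J := (Finset.mem_sdiff.1 hzmem).1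
      have hzJ' : z ∉ J' := (Finset.mem_sdiff.1 hzmem).2
      have hne : (J' \ J).Nonempty := by
        rw [Finset.sdiff_nonempty]
        intro hsub
        have hJJ' : J' = J := Finset.eq_of_subset_of_card_le hsub (by omega)
        rw [hJJ'] at hzJ'
        exact hzJ' hzJ
      obtain ⟨z', hz'mem⟩ := hne
      have hz'J' : z' ∈ J' := (Finset.mem_sdiff.1 hz'mem).1
      have hz'J : z' ∉ J := (Finset.mem_sdiff.1 hz'mem).2
      have hzz' : z ≠ z' := fun h => hz'J (h ▸ hzJ)
      have hzIm : z ∉ J.erase z := Finset.notMem_erase z J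
      have hz'Im : z' ∉ J.erase z := fun h => hz'J (Finset.erase_subset z J h)
      have hwIm : w ∉ J.erase z := fun h => hwJ (Finset.erase_subset z J h)
      have hzw : z ≠ w := fun h => hwJ (h ▸ hzJ)
      have hz'w : z' ≠ w := fun h => hwJ' (h ▸ hz'J')
      have hkpos : 1 ≤ (k : ℕ) := by
        rcases Nat.eq_zero_or_pos (k : ℕ) with h0 | h
        · exfalso
          have hJ0 : J = ∅ := Finset.card_eq_zero.1 (hJ.trans h0)
          rw [hJ0] at hzJ
          simp at hzJ
        · exact h
      have hImcard : (J.erase z).card = (k : ℕ) - 1 := by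
        rw [Finset.card_erase_of_mem hzJ, hJ]
      have hc3 : (insert z (insert z' (insert w (J.erase z)))).card = (k : ℕ) + 2 := by
        rw [Finset.card_insert_of_notMem (by
            simp only [Finset.mem_insert]
            push_neg
            exact ⟨hzz', hzw, hzIm⟩),
          Finset.card_insert_of_notMem (by
            simp only [Finset.mem_insert]
            push_neg
            exact ⟨hz'w, hz'Im⟩),
          Finset.card_insert_of_notMem hwIm, hImcard]
        omega
      have hbound : (k : ℕ) - 1 < t := by
        have hle := Finset.card_le_univ (insert z (insert z' (insert w (J.erase z))))
        rw [hc3, Fintype.card_fin] at hle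
        omega
      have hk2 : (k : ℕ) - 1 + 1 < t + 1 := by omega
      have hkeq : (⟨(k : ℕ) - 1 + 1, hk2⟩ : Fin (t + 1)) = k := by
        apply Fin.ext
        simp only [Fin.val_mk]
        omega
      have hins : insert z (J.erase z) = J := Finset.insert_erase hzJ
      have hJ'' : (insert z' (J.erase z)).card = (k : ℕ) := by
        rw [Finset.card_insert_of_notMem hz'Im, hImcard]
        omega
      have hwJ'' : w ∉ insert z' (J.erase z) := by
        simp only [Finset.mem_insert]
        push_neg
        exact ⟨Ne.symm hz'w, hwIm⟩
      have hdiff : (insert z' (J.erase z)) \ J' = (J \ J').erase z := by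
        ext x
        simp only [Finset.mem_sdiff, Finset.mem_insert, Finset.mem_erase]
        constructor
        · rintro ⟨hx1 | hx2, hx3⟩
          · exact absurd (hx1 ▸ hz'J') hx3
          · exact ⟨hx2.1, hx2.2, hx3⟩
        · rintro ⟨hx1, hx2, hx3⟩
          exact ⟨Or.inr ⟨hx1, hx2⟩, hx3⟩
      have hdec : ((insert z' (J.erase z)) \ J').card < n := by
        rw [hdiff, Finset.card_erase_of_mem hzmem, hn]
        omega
      calc DD t X w J k = DD t X w (insert z (J.erase z)) ⟨(k : ℕ) - 1 + 1, hk2⟩ := by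
            rw [hins, hkeq]
        _ = DD t X w (insert z' (J.erase z)) ⟨(k : ℕ) - 1 + 1, hk2⟩ :=
            DD_adjacent t X hX w z z' (J.erase z) ((k : ℕ) - 1) hbound (by omega) hk2
              hwIm hzIm hz'Im hzw hz'w
        _ = DD t X w (insert z' (J.erase z)) k := by rw [hkeq]
        _ = DD t X w J' k :=
            ih _ hdec (insert z' (J.erase z)) J' rfl hJ'' hJ' hwJ'' hwJ'

lemma dcount_eq_sum (t : ℕ) (X : Multiset (Equiv.Perm (Fin (t + 1)))) (w : Fin (t + 1))
    (k : ℕ) (hk : k < t + 1) :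
    dcount (t + 1) X w k =
      ∑ I ∈ Finset.powersetCard k (Finset.univ.erase w), DD t X w I ⟨k, hk⟩ := by
  unfold dcount DD
  rw [countP_eq_sum]
  rw [sum_countP X (Finset.powersetCard k (Finset.univ.erase w)) (fun I π => π ⟨k, hk⟩ = w ∧
    Finset.image (fun j => π j) (Finset.Iio (⟨k, hk⟩ : Fin (t + 1))) = I)]
  congr 1
  apply Multiset.map_congr rfl
  intro π _
  by_cases hπ : π ⟨k, hk⟩ = w
  · have hex : (∃ p : Fin (t + 1), (p : ℕ) = k ∧ π p = w) := ⟨⟨k, hk⟩, rfl, hπ⟩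
    rw [if_pos hex]
    have himg : Finset.image (fun j => π j) (Finset.Iio (⟨k, hk⟩ : Fin (t + 1))) ∈
        Finset.powersetCard k (Finset.univ.erase w) := by
      rw [Finset.mem_powersetCard]
      constructor
      · intro x hx
        simp only [Finset.mem_image, Finset.mem_Iio] at hx
        obtain ⟨j, hj, rfl⟩ := hx
        refine Finset.mem_erase.2 ⟨?_, Finset.mem_univ _⟩
        intro h
        have hje : j = ⟨k, hk⟩ := π.injective (h.trans hπ.symm)
        rw [hje] at hj
        exact lt_irrefl _ hj
      · rw [Finset.card_image_of_injective _ π.injective, Fin.card_Iio]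
    have hfil : (Finset.powersetCard k (Finset.univ.erase w)).filter (fun I => π ⟨k, hk⟩ = w ∧
        Finset.image (fun j => π j) (Finset.Iio (⟨k, hk⟩ : Fin (t + 1))) = I) =
        {Finset.image (fun j => π j) (Finset.Iio (⟨k, hk⟩ : Fin (t + 1)))} := by
      apply Finset.eq_singleton_iff_unique_mem.2
      refine ⟨Finset.mem_filter.2 ⟨himg, hπ, rfl⟩, ?_⟩
      intro I hI
      exact ((Finset.mem_filter.1 hI).2.2).symm
    rw [hfil, Finset.card_singleton]
  · have hnex : ¬ (∃ p : Fin (t + 1), (p : ℕ) = k ∧ π p = w) := by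
      rintro ⟨p, hp, hpw⟩
      apply hπ
      have hpe : p = ⟨k, hk⟩ := Fin.ext hp
      rw [← hpe]
      exact hpw
    have hfil : (Finset.powersetCard k (Finset.univ.erase w)).filter (fun I => π ⟨k, hk⟩ = w ∧
        Finset.image (fun j => π j) (Finset.Iio (⟨k, hk⟩ : Fin (t + 1))) = I) = ∅ :=
      Finset.filter_false_of_mem (fun I _ h => hπ h.1)
    rw [if_neg hnex, hfil, Finset.card_empty]

end PSCAaux

/-- Theorem 2.5: in a PSCA(t+1, t, 1), for any symbol `w`, position `i` and any
`i`-subset `I ⊆ [t+1] \ {w}`, the number of permutations `π` with `π(i) = w` whose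
first `i` entries form the set `I` equals `d_w(i)/C(t,i)`. -/
theorem stmt8 (t : ℕ) (ht : 2 ≤ t)
    (X : Multiset (Equiv.Perm (Fin (t + 1)))) (hX : IsPSCA (t + 1) t 1 X)
    (w : Fin (t + 1)) (i : Fin (t + 1))
    (I : Finset (Fin (t + 1))) (hI : I.card = (i : ℕ)) (hwI : w ∉ I) :
    X.countP (fun π => π i = w ∧ Finset.image (fun j => π j) (Finset.Iio i) = I) =
      dcount (t + 1) X w (i : ℕ) / Nat.choose t (i : ℕ) := by
  obtain ⟨k, hk⟩ := i
  have hcoe : ((⟨k, hk⟩ : Fin (t + 1)) : ℕ) = k := rfl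
  rw [hcoe] at hI ⊢
  show PSCAaux.DD t X w I ⟨k, hk⟩ = dcount (t + 1) X w k / Nat.choose t k
  rw [PSCAaux.dcount_eq_sum t X w k hk]
  have hconst : ∀ I' ∈ Finset.powersetCard k (Finset.univ.erase w),
      PSCAaux.DD t X w I' ⟨k, hk⟩ = PSCAaux.DD t X w I ⟨k, hk⟩ := by
    intro I' hI'
    obtain ⟨hsub, hcard⟩ := Finset.mem_powersetCard.1 hI'
    have hwI' : w ∉ I' := fun h => (Finset.mem_erase.1 (hsub h)).1 rfl
    exact PSCAaux.DD_constant t X hX w ⟨k, hk⟩ ((I' \ I).card) I' I rfl hcard hI hwI' hwI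
  rw [Finset.sum_congr rfl hconst, Finset.sum_const, smul_eq_mul,
    Finset.card_powersetCard, Finset.card_erase_of_mem (Finset.mem_univ w),
    Finset.card_univ, Fintype.card_fin, Nat.add_sub_cancel]
  rw [Nat.mul_div_cancel_left _ (Nat.choose_pos (by omega))]
end

section
/- There is no PSCA(5, 3, 1): no multiset of 6 permutations of {0,1,2,3,4} covers every ordered triple of distinct symbols exactly once. -/
open scoped Classical

/-- No increasing triple: `g` (thought of as `π.symm`) places no three symbols
`a < b < c` in increasing order. -/
def P2 (g : Fin 5 → Fin 5) : Prop :=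
  ∀ a b c : Fin 5, a < b → b < c → g a < g b → g b < g c → False

/-- `g` and `h` cover no common triple. -/
def D2 (g h : Fin 5 → Fin 5) : Prop :=
  ∀ a b c : Fin 5, g a < g b → g b < g c → h a < h b → h b < h c → False

def CL : List (Fin 5 → Fin 5) := [
  ![0,4,3,2,1],
  ![1,0,4,3,2],
  ![1,4,0,3,2],
  ![1,4,3,0,2],
  ![1,4,3,2,0],
  ![2,0,4,3,1],
  ![2,1,0,4,3],
  ![2,1,4,0,3],
  ![2,1,4,3,0],
  ![2,4,0,3,1],
  ![2,4,1,0,3],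
  ![2,4,1,3,0],
  ![2,4,3,0,1],
  ![2,4,3,1,0],
  ![3,0,4,2,1],
  ![3,1,0,4,2],
  ![3,1,4,0,2],
  ![3,1,4,2,0],
  ![3,2,0,4,1],
  ![3,2,1,0,4],
  ![3,2,1,4,0],
  ![3,2,4,0,1],
  ![3,2,4,1,0],
  ![3,4,0,2,1],
  ![3,4,1,0,2],
  ![3,4,1,2,0],
  ![3,4,2,0,1],
  ![3,4,2,1,0],
  ![4,0,3,2,1],
  ![4,1,0,3,2],
  ![4,1,3,0,2],
  ![4,1,3,2,0],
  ![4,2,0,3,1],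
  ![4,2,1,0,3],
  ![4,2,1,3,0],
  ![4,2,3,0,1],
  ![4,2,3,1,0],
  ![4,3,0,2,1],
  ![4,3,1,0,2],
  ![4,3,1,2,0],
  ![4,3,2,0,1],
  ![4,3,2,1,0]]

instance (g : Fin 5 → Fin 5) : Decidable (P2 g) :=
  inferInstanceAs (Decidable (∀ a b c : Fin 5, a < b → b < c → g a < g b → g b < g c → False))

instance (g h : Fin 5 → Fin 5) : Decidable (D2 g h) :=
  inferInstanceAs (Decidable (∀ a b c : Fin 5, g a < g b → g b < g c → h a < h b → h b < h c → False))

set_option maxRecDepth 8000 in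
set_option maxHeartbeats 8000000 in
lemma mem_CL5 : ∀ v0 v1 v2 v3 v4 : Fin 5, Function.Injective ![v0, v1, v2, v3, v4] →
    P2 ![v0, v1, v2, v3, v4] → ![v0, v1, v2, v3, v4] ∈ CL := by decide

lemma mem_CL (g : Fin 5 → Fin 5) (hi : Function.Injective g) (hp : P2 g) : g ∈ CL := by
  have e : ![g 0, g 1, g 2, g 3, g 4] = g := by funext i; fin_cases i <;> rfl
  rw [← e]
  exact mem_CL5 _ _ _ _ _ (by rw [e]; exact hi) (by rw [e]; exact hp)

set_option maxRecDepth 8000 in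
set_option maxHeartbeats 8000000 in
lemma searchIdx : ∀ i : Fin CL.length, (CL.get i) 0 < (CL.get i) 2 → (CL.get i) 2 < (CL.get i) 1 →
    ∀ j : Fin CL.length, (CL.get j) 1 < (CL.get j) 0 → (CL.get j) 0 < (CL.get j) 2 →
      D2 (CL.get i) (CL.get j) →
    ∀ k : Fin CL.length, (CL.get k) 1 < (CL.get k) 2 → (CL.get k) 2 < (CL.get k) 0 →
      D2 (CL.get i) (CL.get k) → D2 (CL.get j) (CL.get k) → False := by decide

lemma search : ∀ g1 ∈ CL, g1 0 < g1 2 → g1 2 < g1 1 →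
    ∀ g2 ∈ CL, g2 1 < g2 0 → g2 0 < g2 2 → D2 g1 g2 →
    ∀ g3 ∈ CL, g3 1 < g3 2 → g3 2 < g3 0 → D2 g1 g3 → D2 g2 g3 → False := by
  intro g1 hg1
  obtain ⟨i, rfl⟩ := List.mem_iff_get.mp hg1
  intro o1 o2 g2 hg2
  obtain ⟨j, rfl⟩ := List.mem_iff_get.mp hg2
  intro o3 o4 d12 g3 hg3
  obtain ⟨k, rfl⟩ := List.mem_iff_get.mp hg3
  exact searchIdx i o1 o2 j o3 o4 d12 k

lemma sm3 {f : Fin 3 → Fin 5} : StrictMono f ↔ f 0 < f 1 ∧ f 1 < f 2 := by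
  constructor
  · intro h; exact ⟨h (by decide), h (by decide)⟩
  · rintro ⟨h1, h2⟩ i j hij
    fin_cases i <;> fin_cases j <;>
      first
        | exact absurd hij (by decide)
        | exact h1
        | exact h2
        | exact h1.trans h2

lemma covers_iff {π : Equiv.Perm (Fin 5)} {a b c : Fin 5} :
    Covers π ![a, b, c] ↔ (π.symm a < π.symm b ∧ π.symm b < π.symm c) := by
  unfold Covers
  rw [sm3]
  exact Iff.rfl

lemma covers_one {s : Fin 3 → Fin 5} :
    Covers (1 : Equiv.Perm (Fin 5)) s ↔ StrictMono s := Iff.rfl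

lemma inj3 {a b c : Fin 5} (hab : a ≠ b) (hac : a ≠ c) (hbc : b ≠ c) :
    Function.Injective ![a, b, c] := by
  intro i j h
  fin_cases i <;> fin_cases j <;> simp_all

lemma two_le {Y : Multiset (Equiv.Perm (Fin 5))} {p : Equiv.Perm (Fin 5) → Prop}
    {π π' : Equiv.Perm (Fin 5)} (h : π ∈ Y) (h' : π' ∈ Y) (hne : π ≠ π')
    (hp : p π) (hp' : p π') : 2 ≤ Y.countP p := by
  obtain ⟨Z, rfl⟩ := Multiset.exists_cons_of_mem h
  have h'' : π' ∈ Z := by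
    rcases Multiset.mem_cons.mp h' with h | h
    · exact absurd h.symm hne
    · exact h
  rw [Multiset.countP_cons]
  have h1 : 0 < Z.countP p := Multiset.countP_pos.mpr ⟨π', h'', hp'⟩
  rw [if_pos hp]
  omega

/-- There is no PSCA(5, 3, 1). -/
theorem stmt11 : ¬ ∃ X : Multiset (Equiv.Perm (Fin 5)), IsPSCA 5 3 1 X := by
  rintro ⟨X, hX⟩
  -- find some permutation in X
  have h0 := hX ![0, 1, 2] (by decide)
  obtain ⟨π₀, hπ₀, -⟩ := Multiset.countP_pos.mp (h0 ▸ Nat.one_pos)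
  -- renormalize so that the identity is in the array
  set X' : Multiset (Equiv.Perm (Fin 5)) := X.map (fun π => π₀⁻¹ * π) with hX'def
  have memkey : ∀ (π : Equiv.Perm (Fin 5)) (s : Fin 3 → Fin 5),
      Covers (π₀⁻¹ * π) s ↔ Covers π (⇑π₀ ∘ s) := by
    intro π s
    unfold Covers
    have he : (fun i => (π₀⁻¹ * π).symm (s i)) = fun i => π.symm ((⇑π₀ ∘ s) i) := by
      funext i
      simp [Equiv.Perm.mul_def, Equiv.symm_trans_apply, Equiv.Perm.inv_def]
    rw [he]
  have hX' : IsPSCA 5 3 1 X' := by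
    intro s hs
    have h1 : X'.countP (fun π => Covers π s)
        = X.countP (fun π => Covers (π₀⁻¹ * π) s) := by
      rw [hX'def, Multiset.countP_map, Multiset.countP_eq_card_filter]
    have h2 : X.countP (fun π => Covers (π₀⁻¹ * π) s)
        = X.countP (fun π => Covers π (⇑π₀ ∘ s)) := by
      apply Multiset.countP_congr rfl
      intro π _
      simpa using (memkey π s)
    rw [h1, h2]
    exact hX _ (π₀.injective.comp hs)
  have h1mem : (1 : Equiv.Perm (Fin 5)) ∈ X' := by
    rw [hX'def]
    exact Multiset.mem_map.mpr ⟨π₀, hπ₀, by group⟩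
  obtain ⟨Y, hY⟩ := Multiset.exists_cons_of_mem h1mem
  -- every member of Y avoids all increasing triples
  have factA : ∀ π ∈ Y, P2 ⇑π.symm := by
    intro π hπ a b c hab hbc hg1 hg2
    have hsm : StrictMono ![a, b, c] := sm3.mpr ⟨hab, hbc⟩
    have hc := hX' ![a, b, c] hsm.injective
    rw [hY, Multiset.countP_cons, if_pos (covers_one.mpr hsm)] at hc
    have hz : Y.countP (fun π => Covers π ![a, b, c]) = 0 := by omega
    exact Multiset.countP_eq_zero.mp hz π hπ (covers_iff.mpr ⟨hg1, hg2⟩)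
  -- no two distinct members of Y cover a common triple
  have hD : ∀ ρ ρ' : Equiv.Perm (Fin 5), ρ ∈ Y → ρ' ∈ Y → ρ ≠ ρ' →
      D2 ⇑ρ.symm ⇑ρ'.symm := by
    intro ρ ρ' hρ hρ' hne a b c h1 h2 h3 h4
    have hab : a ≠ b := fun e => absurd h1 (by rw [e]; exact lt_irrefl _)
    have hac : a ≠ c := fun e => absurd (h1.trans h2) (by rw [e]; exact lt_irrefl _)
    have hbc : b ≠ c := fun e => absurd h2 (by rw [e]; exact lt_irrefl _)
    have hc := hX' ![a, b, c] (inj3 hab hac hbc)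
    rw [hY, Multiset.countP_cons] at hc
    have h2le : 2 ≤ Y.countP (fun π => Covers π ![a, b, c]) :=
      two_le hρ hρ' hne (covers_iff.mpr ⟨h1, h2⟩) (covers_iff.mpr ⟨h3, h4⟩)
    split_ifs at hc <;> omega
  -- extract a member of Y covering a given non-monotone triple
  have extract : ∀ s : Fin 3 → Fin 5, Function.Injective s → ¬ StrictMono s →
      ∃ ρ ∈ Y, Covers ρ s := by
    intro s hs hnm
    have hc := hX' s hs
    obtain ⟨ρ, hρ, hcov⟩ := Multiset.countP_pos.mp (hc ▸ Nat.one_pos)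
    refine ⟨ρ, ?_, hcov⟩
    rw [hY] at hρ
    rcases Multiset.mem_cons.mp hρ with h | h
    · subst h; exact absurd (covers_one.mp hcov) hnm
    · exact h
  obtain ⟨ρ1, hρ1Y, hcov1⟩ := extract ![0, 2, 1] (by decide)
    (fun h => absurd (sm3.mp h) (by decide))
  obtain ⟨ρ2, hρ2Y, hcov2⟩ := extract ![1, 0, 2] (by decide)
    (fun h => absurd (sm3.mp h) (by decide))
  obtain ⟨ρ3, hρ3Y, hcov3⟩ := extract ![1, 2, 0] (by decide)
    (fun h => absurd (sm3.mp h) (by decide))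
  obtain ⟨h1a, h1b⟩ := covers_iff.mp hcov1
  obtain ⟨h2a, h2b⟩ := covers_iff.mp hcov2
  obtain ⟨h3a, h3b⟩ := covers_iff.mp hcov3
  -- the three permutations are pairwise distinct
  have hne12 : ρ1 ≠ ρ2 := by
    intro e; rw [← e] at h2a h2b
    exact absurd ((h2a.trans h1a).trans h1b) (lt_irrefl _)
  have hne13 : ρ1 ≠ ρ3 := by
    intro e; rw [← e] at h3a h3b
    exact absurd (h3a.trans h1b) (lt_irrefl _)
  have hne23 : ρ2 ≠ ρ3 := by
    intro e; rw [← e] at h3a h3b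
    exact absurd (h2b.trans h3b) (lt_irrefl _)
  -- now feed everything to the finite search
  exact search ⇑ρ1.symm (mem_CL _ ρ1.symm.injective (factA ρ1 hρ1Y)) h1a h1b
    ⇑ρ2.symm (mem_CL _ ρ2.symm.injective (factA ρ2 hρ2Y)) h2a h2b
    (hD ρ1 ρ2 hρ1Y hρ2Y hne12)
    ⇑ρ3.symm (mem_CL _ ρ3.symm.injective (factA ρ3 hρ3Y)) h3a h3b
    (hD ρ1 ρ3 hρ1Y hρ3Y hne13) (hD ρ2 ρ3 hρ2Y hρ3Y hne23)
end

section
/- In any (5, 3, 1)-feasible distribution vector d = (d(0),…,d(4)) of nonnegative integers, the middle entry d(2) equals 0. Consequently, no PSCA(5, 3, 1) exists, since every symbol would be forbidden from column 2 while column 2 must contain some symbol in each of the 6 permutations. -/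
open scoped Classical

/-!
The column of a symbol `a` in a permutation `π` is the number of symbols placed before it, and its
square is the number of pairs of symbols placed before it. Summing over a PSCA(v, 3, λ) and
splitting each such event according to where a third symbol sits reduces both counts to triples,
each covered exactly `λ` times: the first two moments of the distribution vector of `a` are
`(v - 1)·3λ` and `(v - 1)(3λ + (v - 2)·2λ)`. For `v = 5`, `λ = 1` these are `12` and `36`, which
force `d(2) = 0`; yet the symbol in column `2` of any permutation of the array has `d(2) > 0`.
-/

open Finset Equiv

theorem Multiset.countP_eq_sum_map_ite {α : Type*} (p : α → Prop) [DecidablePred p]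
    (s : Multiset α) : s.countP p = (s.map fun a => if p a then 1 else 0).sum := by
  induction s using Multiset.induction with
  | empty => simp
  | cons a s ih => simp [Multiset.countP_cons, ih, add_comm]

section LinearOrder

variable {α : Type*} [LinearOrder α] {i j k : α}

theorem ite_lt_eq_add (hik : i ≠ k) (hjk : j ≠ k) :
    (if j < i then 1 else 0 : ℕ) = (if k < j ∧ j < i then 1 else 0) +
      (if j < k ∧ k < i then 1 else 0) + (if j < i ∧ i < k then 1 else 0) := by
  split_ifs <;> grind

theorem ite_lt_and_lt_eq_add (hjk : j ≠ k) :
    (if j < i ∧ k < i then 1 else 0 : ℕ) =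
      (if j < k ∧ k < i then 1 else 0) + (if k < j ∧ j < i then 1 else 0) := by
  split_ifs <;> grind

end LinearOrder

theorem Fin.sum_sum_ite_or (v : ℕ) (a : Fin v) (m n : ℕ) :
    ∑ b : Fin v, ∑ c : Fin v, (if b = a ∨ c = a then 0 else if b = c then m else n) =
      (v - 1) * (m + (v - 2) * n) := by
  have inner (b) (hb : b ∈ univ.erase a) :
      ∑ c : Fin v, (if b = a ∨ c = a then 0 else if b = c then m else n) = m + (v - 2) * n := by
    have hba := ne_of_mem_erase hb
    rw [← add_sum_erase _ _ (mem_univ b), ← sum_erase _ (a := a) (by simp),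
      sum_congr rfl fun c hc => show _ = n by grind]
    simp [hba, card_erase_of_mem, mem_erase, Ne.symm hba, Nat.sub_sub]
  rw [← sum_erase univ (a := a) (by simp), sum_congr rfl inner]
  simp

theorem Fin.val_eq_sum_ite_lt {v : ℕ} (π : Perm (Fin v)) (a : Fin v) :
    (π.symm a : ℕ) = ∑ b, if π.symm b < π.symm a then 1 else 0 := by
  rw [Equiv.sum_comp π.symm (fun i => if i < π.symm a then 1 else 0), sum_boole,
    Nat.cast_id, filter_gt_eq_Iio, Fin.card_Iio]

theorem covers_fin_three_iff {v : ℕ} (π : Perm (Fin v)) (s : Fin 3 → Fin v) :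
    Covers π s ↔ π.symm (s 0) < π.symm (s 1) ∧ π.symm (s 1) < π.symm (s 2) := by
  simp [Covers, Fin.strictMono_iff_lt_succ, Fin.forall_fin_two]

-- The paper's distribution vector: `distribution X a j` permutations of `X` put `a` in column `j`.
def distribution {v : ℕ} (X : Multiset (Perm (Fin v))) (a : Fin v) (j : ℕ) : ℕ :=
  (X.map fun π => (π.symm a : ℕ)).count j

theorem sum_mul_distribution {v : ℕ} (X : Multiset (Perm (Fin v))) (a : Fin v) (g : ℕ → ℕ) :
    ∑ j ∈ range v, g j * distribution X a j = (X.map fun π => g (π.symm a)).sum := by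
  rw [show (X.map fun π => g (π.symm a)) = (X.map fun π => (π.symm a : ℕ)).map g from
    (Multiset.map_map _ _ _).symm, Finset.sum_multiset_map_count]
  have hsupp : (X.map fun π => (π.symm a : ℕ)).toFinset ⊆ range v := fun j hj => by
    obtain ⟨π, -, rfl⟩ := Multiset.mem_map.1 (Multiset.mem_toFinset.1 hj)
    exact mem_range.2 (π.symm a).isLt
  rw [sum_subset hsupp fun j _ hj => ?_]
  · exact sum_congr rfl fun j _ => mul_comm _ _
  · rw [Multiset.count_eq_zero.2 fun h => hj (Multiset.mem_toFinset.2 h), zero_smul]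

theorem distribution_pos {v : ℕ} {X : Multiset (Perm (Fin v))} {π : Perm (Fin v)} (hπ : π ∈ X)
    (k : Fin v) : 0 < distribution X (π k) k :=
  Multiset.count_pos.2 (Multiset.mem_map.2 ⟨π, hπ, by simp⟩)

namespace IsPSCA

variable {v l : ℕ} {X : Multiset (Perm (Fin v))}

theorem exists_mem (hX : IsPSCA v 3 l X) (hv : 2 < v) (hl : l ≠ 0) : ∃ π, π ∈ X := by
  have hcount := hX (Fin.castLE hv) (Fin.castLE_injective hv)
  obtain ⟨π, hπ, -⟩ := Multiset.countP_pos.1 (hcount ▸ Nat.pos_of_ne_zero hl)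
  exact ⟨π, hπ⟩

theorem sum_ite_lt_lt (hX : IsPSCA v 3 l X) {x y z : Fin v} (hxy : x ≠ y) (hxz : x ≠ z)
    (hyz : y ≠ z) :
    (X.map fun π => if π.symm x < π.symm y ∧ π.symm y < π.symm z then 1 else 0).sum = l := by
  have hinj : Function.Injective ![x, y, z] := by
    intro i j h
    fin_cases i <;> fin_cases j <;> simp_all [eq_comm]
  rw [← Multiset.countP_eq_sum_map_ite, ← hX _ hinj]
  simp [covers_fin_three_iff]

theorem sum_ite_lt (hX : IsPSCA v 3 l X) (hv : 2 < v) (a b : Fin v) :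
    (X.map fun π => if π.symm b < π.symm a then 1 else 0).sum = if b = a then 0 else 3 * l := by
  split_ifs with hba
  · simp [hba]
  obtain ⟨c, hca, hcb⟩ := Fin.exists_ne_and_ne_of_two_lt a b hv
  rw [Multiset.map_congr rfl fun π _ =>
      ite_lt_eq_add (π.symm.injective.ne (Ne.symm hca)) (π.symm.injective.ne (Ne.symm hcb)),
    Multiset.sum_map_add, Multiset.sum_map_add, hX.sum_ite_lt_lt hcb hca hba,
    hX.sum_ite_lt_lt hcb.symm hba hca, hX.sum_ite_lt_lt hba hcb.symm hca.symm]
  ring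

theorem sum_ite_lt_and_lt (hX : IsPSCA v 3 l X) (hv : 2 < v) (a b c : Fin v) :
    (X.map fun π => if π.symm b < π.symm a ∧ π.symm c < π.symm a then 1 else 0).sum =
      if b = a ∨ c = a then 0 else if b = c then 3 * l else 2 * l := by
  split_ifs with hbca hbc
  · rcases hbca with rfl | rfl <;> simp
  · subst hbc
    simpa [(not_or.1 hbca).1] using hX.sum_ite_lt hv a b
  · obtain ⟨hba, hca⟩ := not_or.1 hbca
    rw [Multiset.map_congr rfl fun π _ => ite_lt_and_lt_eq_add (π.symm.injective.ne hbc),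
      Multiset.sum_map_add, hX.sum_ite_lt_lt hbc hba hca, hX.sum_ite_lt_lt (Ne.symm hbc) hca hba]
    ring

theorem sum_mul_distribution_eq (hX : IsPSCA v 3 l X) (hv : 2 < v) (a : Fin v) :
    ∑ j ∈ range v, j * distribution X a j = (v - 1) * (3 * l) := by
  rw [sum_mul_distribution X a fun j => j,
    Multiset.map_congr rfl fun π _ => Fin.val_eq_sum_ite_lt π a, Multiset.sum_map_sum,
    sum_congr rfl fun b _ => hX.sum_ite_lt hv a b]
  simp [sum_ite, filter_ne']

theorem sum_sq_mul_distribution_eq (hX : IsPSCA v 3 l X) (hv : 2 < v) (a : Fin v) :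
    ∑ j ∈ range v, j ^ 2 * distribution X a j = (v - 1) * (3 * l + (v - 2) * (2 * l)) := by
  have hsq (π : Perm (Fin v)) : (π.symm a : ℕ) ^ 2 =
      ∑ b, ∑ c, if π.symm b < π.symm a ∧ π.symm c < π.symm a then 1 else 0 := by
    simp only [sq, Fin.val_eq_sum_ite_lt π a, sum_mul_sum, ite_zero_mul_ite_zero, mul_one]
  rw [sum_mul_distribution X a fun j => j ^ 2, Multiset.map_congr rfl fun π _ => hsq π]
  simp only [Multiset.sum_map_sum, hX.sum_ite_lt_and_lt hv]
  exact Fin.sum_sum_ite_or v a _ _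

end IsPSCA

-- The moments give `d 1 + d 2 = 2 d 4` and `d 2 + 3 d 3 + 6 d 4 = 12`, leaving no room for `d 2 > 0`.
theorem middle_eq_zero_of_moments {d : ℕ → ℕ} (h1 : ∑ j ∈ range 5, j * d j = 12)
    (h2 : ∑ j ∈ range 5, j ^ 2 * d j = 36) : d 2 = 0 := by
  simp only [sum_range_succ, sum_range_zero] at h1 h2
  omega

theorem stmt12_general (d : ℕ → ℕ)
    (h1 : ∑ j ∈ Finset.range 5, j * d j = 12)
    (h2 : ∑ j ∈ Finset.range 5, j ^ 2 * d j = 36) :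
    d 2 = 0 ∧ ¬ ∃ X : Multiset (Equiv.Perm (Fin 5)), IsPSCA 5 3 1 X := by
  refine ⟨middle_eq_zero_of_moments h1 h2, fun ⟨X, hX⟩ => ?_⟩
  obtain ⟨π, hπ⟩ := hX.exists_mem (by norm_num) one_ne_zero
  have hmiddle := middle_eq_zero_of_moments (hX.sum_mul_distribution_eq (by norm_num) (π 2))
    (hX.sum_sq_mul_distribution_eq (by norm_num) (π 2))
  exact (distribution_pos hπ 2).ne' hmiddle

/-- Every (5, 3, 1)-feasible distribution has middle entry `d(2) = 0`;
consequently no PSCA(5, 3, 1) exists. -/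
theorem stmt12 (d : ℕ → ℕ)
    (h0 : ∑ j ∈ Finset.range 5, d j = 6)
    (h1 : ∑ j ∈ Finset.range 5, j * d j = 12)
    (h2 : ∑ j ∈ Finset.range 5, j ^ 2 * d j = 36)
    (h3 : ∀ j < 3, 3 ∣ ∑ i ∈ (Finset.range 5).filter (fun i => i % 3 = j), d i) :
    d 2 = 0 ∧ ¬ ∃ X : Multiset (Equiv.Perm (Fin 5)), IsPSCA 5 3 1 X :=
  stmt12_general d h1 h2
end

section
/- Let G be a group acting on [v] via an injective homomorphism ψ : G → S_v with image T, and let Th be a right coset of T in S_v. If two t-sequences x, y of distinct elements of [v] lie in the same orbit under the induced action of G on t-sequences (i.e., y = (ψ_g(x₀),…,ψ_g(x_{t−1})) for some g ∈ G), then x and y are covered by the same number of permutations of Th. -/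
open scoped Classical

/-- Lemma 4.1: sequences in the same orbit under the action of `G` (via `ψ`) are covered
by the same number of permutations of any right coset `Th` of the image `T` of `ψ`. -/
theorem stmt13 (v t : ℕ) (G : Type*) [Group G] [Fintype G]
    (ψ : G →* Equiv.Perm (Fin v)) (hψ : Function.Injective ψ)
    (h : Equiv.Perm (Fin v)) (x y : Fin t → Fin v)
    (hx : Function.Injective x) (hy : Function.Injective y)
    (g : G) (hgy : ∀ i, y i = ψ g (x i)) :
    ((Finset.univ.image fun a : G => h.trans (ψ a)).filter fun f => Covers f x).card =
      ((Finset.univ.image fun a : G => h.trans (ψ a)).filter fun f => Covers f y).card := by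
  have key : ∀ f : Equiv.Perm (Fin v), Covers (f.trans (ψ g)) y ↔ Covers f x := by
    intro f
    have : (fun i => (f.trans (ψ g)).symm (y i)) = fun i => f.symm (x i) := by
      funext i; simp [hgy i]
    unfold Covers
    rw [this]
  apply Finset.card_bij (fun f _ => f.trans (ψ g))
  · intro f hf
    simp only [Finset.mem_filter, Finset.mem_image, Finset.mem_univ, true_and] at hf ⊢
    obtain ⟨⟨a, ha⟩, hc⟩ := hf
    refine ⟨⟨g * a, ?_⟩, (key f).2 hc⟩
    rw [← ha, map_mul]
    ext z; simp
  · intro f1 _ f2 _ hfe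
    have := congrArg (fun e => e.trans (ψ g).symm) hfe
    simpa [Equiv.trans_assoc] using this
  · intro f hf
    simp only [Finset.mem_filter, Finset.mem_image, Finset.mem_univ, true_and] at hf ⊢
    obtain ⟨⟨a, ha⟩, hc⟩ := hf
    refine ⟨h.trans (ψ (g⁻¹ * a)), ⟨⟨g⁻¹ * a, rfl⟩, ?_⟩, ?_⟩
    · apply (key _).1
      have : (h.trans (ψ (g⁻¹ * a))).trans (ψ g) = f := by
        rw [← ha, map_mul, map_inv]; ext z; simp
      rw [this]; exact hc
    · rw [← ha, map_mul, map_inv]; ext z; simp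
end

section
/- Let G be a group with an injective homomorphism ψ : G → S_v whose image T is a transitive permutation group, and let X be a multiset union of right cosets of T in S_v. Fix w ∈ [v] and 0 ≤ i ≤ t−1, and let S be the set of t-sequences s of distinct elements of [v] with s_i = w. If every sequence in S is covered by exactly λ permutations of X, then X is a PSCA(v, t, λ). -/
open scoped Classical

/-- Lemma 4.2: if `T` (the image of an injective `ψ : G → S_v`) is transitive and `X` is a
multiset union of right cosets of `T` covering every `t`-sequence with `i`-th entry `w`
exactly `λ` times, then `X` is a PSCA(v, t, λ). -/
theorem stmt14 (v t l : ℕ) (G : Type*) [Group G] [Fintype G]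
    (ψ : G →* Equiv.Perm (Fin v)) (hψ : Function.Injective ψ)
    (htrans : ∀ a b : Fin v, ∃ g : G, ψ g a = b)
    (X : Multiset (Equiv.Perm (Fin v)))
    (hcoset : ∃ hs : Multiset (Equiv.Perm (Fin v)),
      X = hs.bind fun h => Multiset.map (fun a : G => h.trans (ψ a)) Finset.univ.val)
    (w : Fin v) (i : Fin t)
    (hcov : ∀ s : Fin t → Fin v, Function.Injective s → s i = w →
      X.countP (fun π => Covers π s) = l) :
    IsPSCA v t l X := by
  intro s hs
  obtain ⟨g, hg⟩ := htrans (s i) w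
  have hs' : Function.Injective (fun j => ψ g (s j)) :=
    fun a b hab => hs ((ψ g).injective hab)
  have key := hcov _ hs' hg
  -- X is invariant under right multiplication by (ψ g)⁻¹
  have hXmap : X.map (fun π => π.trans (ψ g).symm) = X := by
    obtain ⟨hs0, rfl⟩ := hcoset
    rw [Multiset.map_bind]
    refine congrArg _ (funext fun h => ?_)
    rw [Multiset.map_map]
    have hcomp : ((fun π : Equiv.Perm (Fin v) => π.trans (ψ g).symm) ∘
        fun a : G => h.trans (ψ a))
        = (fun a : G => h.trans (ψ a)) ∘ ⇑(Equiv.mulLeft g⁻¹) := by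
      funext a
      simp only [Function.comp_apply, Equiv.coe_mulLeft, map_mul, map_inv]
      ext x
      simp [Equiv.Perm.mul_apply, Equiv.Perm.inv_def]
    rw [hcomp, ← Multiset.map_map, Multiset.map_univ_val_equiv]
  calc X.countP (fun π => Covers π s)
      = (X.map (fun π => π.trans (ψ g).symm)).countP (fun π => Covers π s) := by
        rw [hXmap]
    _ = X.countP (fun π => Covers π (fun j => ψ g (s j))) := by
        rw [Multiset.countP_map, Multiset.countP_eq_card_filter]
        congr 1
    _ = l := key
end

section
/- Let E be an elementary abelian 2-group on the set [v], acting on itself by translation via ψ_g(x) = g ⊕ x, with image T ≤ S_v. Let S be the set of triples (s₀, s₁, s₂) of distinct elements of [v] such that {s₀, s₁, s₂} is contained in some order-4 subgroup of E. If X is a multiset union of right cosets of T and every triple in S is covered exactly λ times by X, then X is a PSCA(v, 3, λ). -/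
open scoped Classical

/-- A permutation `π` of a linearly ordered symbol set covers a sequence `s` of `t`
distinct symbols if they appear in `π` in the given order. -/
def Covers' {α : Type*} [LinearOrder α] {t : ℕ} (π : Equiv.Perm α) (s : Fin t → α) : Prop :=
  StrictMono fun i => π.symm (s i)

/-- Lemma 4.3: let `E` be an elementary abelian 2-group acting on itself by translation,
and `X` a multiset union of right cosets of the translation group. If every triple of
distinct elements lying inside some order-4 subgroup is covered exactly `λ` times,
then every triple of distinct elements is covered exactly `λ` times, i.e. `X` is a
PSCA(v, 3, λ). -/
theorem stmt16 (E : Type*) [AddCommGroup E] [Fintype E] [LinearOrder E]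
    (h2 : ∀ e : E, e + e = 0) (l : ℕ)
    (X : Multiset (Equiv.Perm E))
    (hcoset : ∃ hs : Multiset (Equiv.Perm E),
      X = hs.bind fun h => Multiset.map (fun g : E => h.trans (Equiv.addLeft g)) Finset.univ.val)
    (hcov : ∀ s : Fin 3 → E, Function.Injective s →
      (∃ H : AddSubgroup E, Nat.card H = 4 ∧ ∀ i, s i ∈ H) →
      X.countP (fun π => Covers' π s) = l) :
    ∀ s : Fin 3 → E, Function.Injective s → X.countP (fun π => Covers' π s) = l := by
  have hneg : ∀ x : E, -x = x := fun x => neg_eq_of_add_eq_zero_left (h2 x)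
  have cancel : ∀ x y : E, x + (x + y) = y := by
    intro x y; rw [← add_assoc, h2, zero_add]
  -- X is invariant under post-composition with any translation
  have hmap : ∀ b : E, X.map (fun π => π.trans (Equiv.addLeft b)) = X := by
    intro b
    obtain ⟨hs, rfl⟩ := hcoset
    rw [Multiset.map_bind]
    apply Multiset.bind_congr
    intro h _
    rw [Multiset.map_map]
    have huniv : Multiset.map (fun g : E => b + g) Finset.univ.val = Finset.univ.val := by
      have := Finset.map_univ_equiv (Equiv.addLeft b)
      calc Multiset.map (fun g : E => b + g) Finset.univ.val
          = (Finset.univ.map (Equiv.addLeft b).toEmbedding).val := rfl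
        _ = Finset.univ.val := by rw [this]
    conv_rhs => rw [← huniv, Multiset.map_map]
    apply Multiset.map_congr rfl
    intro g _
    show (h.trans (Equiv.addLeft g)).trans (Equiv.addLeft b) = h.trans (Equiv.addLeft (b + g))
    ext x
    simp [add_assoc]
  -- countP is invariant under translating the triple
  have key : ∀ (b : E) (s : Fin 3 → E),
      X.countP (fun π => Covers' π fun i => b + s i)
        = X.countP (fun π => Covers' π s) := by
    intro b s
    conv_lhs => rw [← hmap b]
    rw [Multiset.countP_map, Multiset.countP_eq_card_filter]
    congr 1
    apply Multiset.filter_congr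
    intro ρ _
    have hf : (fun i => (ρ.trans (Equiv.addLeft b)).symm (b + s i))
        = fun i => ρ.symm (s i) := by
      funext i
      simp [Equiv.symm_trans_apply, hneg, cancel]
    constructor
    · intro hc; unfold Covers' at *; rwa [hf] at hc
    · intro hc; unfold Covers' at *; rwa [hf]
  intro s hinj
  rw [← key (s 0) s]
  set a := s 0 + s 1 with ha
  set b := s 0 + s 2 with hb
  have hinj01 : s 0 ≠ s 1 := fun h => (by omega : (0 : Fin 3) ≠ 1) (hinj h)
  have hinj02 : s 0 ≠ s 2 := fun h => (by omega : (0 : Fin 3) ≠ 2) (hinj h)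
  have hinj12 : s 1 ≠ s 2 := fun h => (by omega : (1 : Fin 3) ≠ 2) (hinj h)
  have hadd_eq : ∀ x y : E, s 0 + x = s 0 + y → x = y := fun x y h => by
    have := congrArg (s 0 + ·) h
    simpa [cancel] using this
  have haz : a ≠ 0 := fun h => hinj01 (hadd_eq _ _ (by rw [h2, ← ha, h])).symm
  have hbz : b ≠ 0 := fun h => hinj02 (hadd_eq _ _ (by rw [h2, ← hb, h])).symm
  have hab : a ≠ b := fun h => hinj12 (hadd_eq _ _ (by rw [← ha, ← hb, h]))
  have habz : a + b ≠ 0 := fun h => hab (by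
    have : a + (a + b) = a + 0 := by rw [h]
    rw [cancel, add_zero] at this; exact this.symm)
  have haba : a + b ≠ a := fun h => hbz (by
    have : a + (a + b) = a + a := by rw [h]
    rwa [cancel, h2] at this)
  have habb : a + b ≠ b := fun h => haz (by
    have : b + (a + b) = b + b := by rw [h]
    rwa [add_comm a b, cancel, h2] at this)
  refine hcov _ (fun i j hij => hinj (hadd_eq _ _ hij)) ?_
  refine ⟨{ carrier := ({0, a, b, a + b} : Set E),
            zero_mem' := by simp,
            add_mem' := ?_,
            neg_mem' := fun hx => by rwa [hneg] }, ?_, ?_⟩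
  · rintro x y (rfl | rfl | rfl | rfl) (rfl | rfl | rfl | rfl) <;>
      simp [Set.mem_insert_iff, Set.mem_singleton_iff, h2, cancel,
        add_comm, add_left_comm, add_assoc]
  · have hcard : Nat.card ({0, a, b, a + b} : Set E) = 4 := by
      rw [Nat.card_coe_set_eq]
      rw [Set.ncard_insert_of_notMem (by
          simp only [Set.mem_insert_iff, Set.mem_singleton_iff, not_or]
          exact ⟨fun h => haz h.symm, fun h => hbz h.symm, fun h => habz h.symm⟩),
        Set.ncard_insert_of_notMem (by
          simp only [Set.mem_insert_iff, Set.mem_singleton_iff, not_or]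
          exact ⟨hab, fun h => haba h.symm⟩),
        Set.ncard_insert_of_notMem (by
          simp only [Set.mem_singleton_iff]
          exact fun h => habb h.symm),
        Set.ncard_singleton]
    exact hcard
  · intro i
    fin_cases i <;>
      simp [AddSubgroup.mem_mk, Set.mem_insert_iff, h2, ha, hb]
end
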